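/- Let X be a Banach space, A : X → X a bounded linear operator, and suppose Lip(Af) ≤ K(Lip(f) + ‖f‖) for all f in a space of Lipschitz functions, and ‖e^{sA}‖ ≤ C e^{-λs} with λ > 0. Then for all t ≥ 0, Lip(e^{tA} f) ≤ e^{Kt}(Lip(f) + K'‖f‖) for some constant K' depending on K, C, λ. More precisely, Lip(e^{tA}f) ≤ K ∫_0^t Lip(e^{sA}f) ds + (KC/λ)‖f‖ + Lip(f), and the bound follows by Gronwall's lemma. -/

import Mathlib

open NormedSpace

/-- Helper instance: the ring of bounded operators on a normed space is a
topological ring (instance search struggles to find this for `X = C(M, ℝ)`). -/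
def clmTopologicalRing (X : Type*) [NormedAddCommGroup X] [NormedSpace ℝ X] :
    IsTopologicalRing (X →L[ℝ] X) := inferInstance

instance {M : Type*} [MetricSpace M] [CompactSpace M] :
    IsTopologicalRing (C(M, ℝ) →L[ℝ] C(M, ℝ)) := clmTopologicalRing _

section Generic
variable {𝔸 : Type*} [NormedRing 𝔸] [NormedAlgebra ℝ 𝔸] [CompleteSpace 𝔸]

lemma gen_cont (Φ : 𝔸 →L[ℝ] ℝ) (A : 𝔸) :
    Continuous fun s : ℝ => Φ (A * exp (s • A)) :=
  (Φ.continuous.comp (continuous_const.mul continuous_id)).comp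
    (continuous_iff_continuousAt.2 fun s => (hasDerivAt_exp_smul_const' A s).continuousAt)

lemma gen_key (Φ : 𝔸 →L[ℝ] ℝ) (A : 𝔸) (t : ℝ) :
    Φ (exp (t • A)) = Φ 1 + ∫ s in (0:ℝ)..t, Φ (A * exp (s • A)) := by
  have hderiv : ∀ s : ℝ, HasDerivAt (fun u : ℝ => Φ (exp (u • A)))
      (Φ (A * exp (s • A))) s := by
    intro s
    have h := (Φ.hasFDerivAt (x := exp (s • A))).comp_hasDerivAt s
      (hasDerivAt_exp_smul_const' A s)
    exact h
  have hint := intervalIntegral.integral_eq_sub_of_hasDerivAt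
    (fun s (_ : s ∈ Set.uIcc 0 t) => hderiv s) ((gen_cont Φ A).intervalIntegrable 0 t)
  have h0 : exp ((0:ℝ) • A) = 1 := by rw [zero_smul, exp_zero]
  rw [h0] at hint
  linarith [hint]

lemma gen_tsum (Φ : 𝔸 →L[ℝ] ℝ) (A : 𝔸) (s : ℝ) :
    Φ (exp (s • A)) = ∑' n : ℕ, (s ^ n / n.factorial) * Φ (A ^ n) := by
  have h1 : exp (s • A) = ∑' n : ℕ, ((n.factorial : ℝ))⁻¹ • (s • A) ^ n := by
    rw [exp_eq_tsum ℝ]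
  have h2 := Φ.map_tsum (expSeries_summable' (𝕂 := ℝ) (s • A))
  rw [h1, h2]
  congr 1
  ext n
  rw [smul_pow, map_smul, map_smul, smul_eq_mul, smul_eq_mul]
  ring
end Generic

lemma real_exp_tsum (r : ℝ) : Real.exp r = ∑' n : ℕ, r ^ n / n.factorial := by
  rw [Real.exp_eq_exp_ℝ, exp_eq_tsum_div]

section CM
variable {M : Type*} [MetricSpace M] [CompactSpace M]

/-- `T ↦ T f x - T f y` as a continuous linear functional on operators. -/
noncomputable def Phi (f : C(M, ℝ)) (x y : M) : (C(M, ℝ) →L[ℝ] C(M, ℝ)) →L[ℝ] ℝ :=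
  (((ContinuousMap.evalCLM ℝ x : C(M, ℝ) →L[ℝ] ℝ))
    - (ContinuousMap.evalCLM ℝ y : C(M, ℝ) →L[ℝ] ℝ)).comp
    (ContinuousLinearMap.apply ℝ (C(M, ℝ)) f)

lemma Phi_apply (f : C(M, ℝ)) (x y : M) (T : C(M, ℝ) →L[ℝ] C(M, ℝ)) :
    Phi f x y T = (T f) x - (T f) y := rfl

lemma key_identity (A : C(M, ℝ) →L[ℝ] C(M, ℝ)) (f : C(M, ℝ)) (x y : M) (t : ℝ) :
    ((exp (t • A)) f) x - ((exp (t • A)) f) y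
      = (f x - f y) + ∫ s in (0:ℝ)..t,
          ((A ((exp (s • A)) f)) x - (A ((exp (s • A)) f)) y) := by
  have h := gen_key (Phi f x y) A t
  simpa only [Phi_apply, ContinuousLinearMap.mul_apply,
    ContinuousLinearMap.one_apply] using h

lemma cont_integrand (A : C(M, ℝ) →L[ℝ] C(M, ℝ)) (f : C(M, ℝ)) (x y : M) :
    Continuous fun s : ℝ =>
      ((A ((exp (s • A)) f)) x - (A ((exp (s • A)) f)) y) := by
  have h := gen_cont (Phi f x y) A
  simpa only [Phi_apply, ContinuousLinearMap.mul_apply] using h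

lemma apriori (A : C(M, ℝ) →L[ℝ] C(M, ℝ)) (K : ℝ) (hK : 0 < K)
    (hA : ∀ (f : C(M, ℝ)) (Lf : ℝ), 0 ≤ Lf →
      (∀ x y, |f x - f y| ≤ Lf * dist x y) →
      ∀ x y, |(A f) x - (A f) y| ≤ K * (Lf + ‖f‖) * dist x y)
    (f : C(M, ℝ)) (Lf : ℝ) (hLf : 0 ≤ Lf)
    (hf : ∀ x y, |f x - f y| ≤ Lf * dist x y)
    (t : ℝ) (s : ℝ) (hs0 : 0 ≤ s) (hst : s ≤ t) (x y : M) :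
    |((exp (s • A)) f) x - ((exp (s • A)) f) y|
      ≤ ((Lf + ‖f‖) * Real.exp (2 * (K + ‖A‖ + 1) * t)) * dist x y := by
  set Mm : ℝ := K + ‖A‖ + 1 with hMm
  have hMm1 : (1:ℝ) ≤ Mm := by
    have := norm_nonneg A; rw [hMm]; linarith
  have hMm0 : (0:ℝ) < Mm := by linarith
  have hKM : K ≤ Mm := by have := norm_nonneg A; simp [hMm]; linarith
  have hAM : ‖A‖ ≤ Mm := by simp [hMm]; linarith
  have hpow : ∀ n : ℕ, ‖(A ^ n) f‖ ≤ Mm ^ n * ‖f‖ ∧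
      ∀ x y, |((A ^ n) f) x - ((A ^ n) f) y| ≤ Mm ^ n * (Lf + n * ‖f‖) * dist x y := by
    intro n
    induction n with
    | zero => simp [hf]
    | succ n ih =>
      have happ : (A ^ (n + 1)) f = A ((A ^ n) f) := by
        rw [pow_succ']; rfl
      constructor
      · rw [happ]
        calc ‖A ((A ^ n) f)‖ ≤ ‖A‖ * ‖(A ^ n) f‖ := A.le_opNorm _
          _ ≤ Mm * (Mm ^ n * ‖f‖) := by
              apply mul_le_mul hAM ih.1 (norm_nonneg _) (le_of_lt hMm0)
          _ = Mm ^ (n + 1) * ‖f‖ := by ring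
      · intro x y
        rw [happ]
        have h1 := hA ((A ^ n) f) (Mm ^ n * (Lf + n * ‖f‖))
          (by positivity) ih.2 x y
        refine h1.trans ?_
        have h2 : K * (Mm ^ n * (Lf + n * ‖f‖) + ‖(A ^ n) f‖)
            ≤ Mm ^ (n + 1) * (Lf + (n + 1) * ‖f‖) := by
          have h3 : K * (Mm ^ n * (Lf + n * ‖f‖) + ‖(A ^ n) f‖)
              ≤ Mm * (Mm ^ n * (Lf + n * ‖f‖) + Mm ^ n * ‖f‖) := by
            apply mul_le_mul hKM _ _ (le_of_lt hMm0)
            · exact add_le_add le_rfl ih.1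
            · positivity
          refine h3.trans ?_
          have : Mm * (Mm ^ n * (Lf + n * ‖f‖) + Mm ^ n * ‖f‖)
              = Mm ^ (n + 1) * (Lf + (n + 1) * ‖f‖) := by ring
          linarith
        push_cast
        push_cast at h2
        exact mul_le_mul_of_nonneg_right h2 dist_nonneg
  have hser := gen_tsum (Phi f x y) A s
  rw [Phi_apply] at hser
  simp only [Phi_apply] at hser
  have hbound : ∀ n : ℕ, |s ^ n / n.factorial * (((A ^ n) f) x - ((A ^ n) f) y)|
      ≤ ((Lf + ‖f‖) * dist x y) * ((2 * Mm * s) ^ n / n.factorial) := by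
    intro n
    rw [abs_mul]
    have hsn : |s ^ n / (n.factorial : ℝ)| = s ^ n / n.factorial := by
      rw [abs_of_nonneg]; positivity
    rw [hsn]
    have h1 := (hpow n).2 x y
    have h2 : Lf + (n : ℝ) * ‖f‖ ≤ 2 ^ n * (Lf + ‖f‖) := by
      have hn2 : (n : ℝ) ≤ 2 ^ n := by
        exact_mod_cast (Nat.lt_two_pow_self (n := n)).le
      have h12 : (1:ℝ) ≤ 2 ^ n := one_le_pow₀ (by norm_num : (1:ℝ) ≤ 2)
      nlinarith [norm_nonneg f]
    calc s ^ n / n.factorial * |((A ^ n) f) x - ((A ^ n) f) y|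
        ≤ s ^ n / n.factorial * (Mm ^ n * (Lf + n * ‖f‖) * dist x y) := by
          apply mul_le_mul_of_nonneg_left h1 (by positivity)
      _ ≤ s ^ n / n.factorial * (Mm ^ n * (2 ^ n * (Lf + ‖f‖)) * dist x y) := by
          apply mul_le_mul_of_nonneg_left _ (by positivity)
          apply mul_le_mul_of_nonneg_right _ dist_nonneg
          exact mul_le_mul_of_nonneg_left h2 (by positivity)
      _ = ((Lf + ‖f‖) * dist x y) * ((2 * Mm * s) ^ n / n.factorial) := by
          rw [mul_pow, mul_pow]; ring
  have hsumb : Summable fun n : ℕ =>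
      ((Lf + ‖f‖) * dist x y) * ((2 * Mm * s) ^ n / n.factorial) :=
    (Real.summable_pow_div_factorial (2 * Mm * s)).mul_left _
  have hsuma : Summable fun n : ℕ =>
      |s ^ n / n.factorial * (((A ^ n) f) x - ((A ^ n) f) y)| :=
    Summable.of_nonneg_of_le (fun n => abs_nonneg _) hbound hsumb
  rw [hser]
  calc |∑' n : ℕ, s ^ n / n.factorial * (((A ^ n) f) x - ((A ^ n) f) y)|
      ≤ ∑' n : ℕ, |s ^ n / n.factorial * (((A ^ n) f) x - ((A ^ n) f) y)| := by
        have hs' : Summable fun n : ℕ =>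
            ‖s ^ n / n.factorial * (((A ^ n) f) x - ((A ^ n) f) y)‖ := by
          simpa only [Real.norm_eq_abs] using hsuma
        simpa only [Real.norm_eq_abs] using norm_tsum_le_tsum_norm hs'
    _ ≤ ∑' n : ℕ, ((Lf + ‖f‖) * dist x y) * ((2 * Mm * s) ^ n / n.factorial) :=
        Summable.tsum_le_tsum hbound hsuma hsumb
    _ = ((Lf + ‖f‖) * dist x y) * Real.exp (2 * Mm * s) := by
        rw [tsum_mul_left, ← real_exp_tsum]
    _ ≤ ((Lf + ‖f‖) * dist x y) * Real.exp (2 * Mm * t) := by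
        have hle : Real.exp (2 * Mm * s) ≤ Real.exp (2 * Mm * t) := by
          apply Real.exp_le_exp.2; nlinarith
        exact mul_le_mul_of_nonneg_left hle (by positivity)
    _ = ((Lf + ‖f‖) * Real.exp (2 * Mm * t)) * dist x y := by ring
end CM

/-- If `A` satisfies `Lip(Af) ≤ K (Lip f + ‖f‖)` on Lipschitz functions and
`‖e^{sA}‖ ≤ C e^{-λ s}` with `λ > 0`, then for every Lipschitz `f` and `t ≥ 0`,
`Lip(e^{tA} f) ≤ e^{K t} (Lip f + K' ‖f‖)` for some constant `K'` depending only
on `K`, `C`, `λ`. -/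
theorem stmt_16 {M : Type*} [MetricSpace M] [CompactSpace M]
    (A : C(M, ℝ) →L[ℝ] C(M, ℝ)) (K Cc lam : ℝ) (hK : 0 < K) (hC : 0 < Cc)
    (hlam : 0 < lam)
    (hA : ∀ (f : C(M, ℝ)) (Lf : ℝ), 0 ≤ Lf →
      (∀ x y, |f x - f y| ≤ Lf * dist x y) →
      ∀ x y, |(A f) x - (A f) y| ≤ K * (Lf + ‖f‖) * dist x y)
    (hexp : ∀ s : ℝ, 0 ≤ s → ‖exp (s • A)‖ ≤ Cc * Real.exp (-lam * s)) :
    ∃ K' : ℝ, 0 < K' ∧ ∀ (f : C(M, ℝ)) (Lf : ℝ), 0 ≤ Lf →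
      (∀ x y, |f x - f y| ≤ Lf * dist x y) →
      ∀ t : ℝ, 0 ≤ t → ∀ x y,
        |((exp (t • A)) f) x - ((exp (t • A)) f) y|
          ≤ Real.exp (K * t) * (Lf + K' * ‖f‖) * dist x y := by
  refine ⟨K * Cc / lam, by positivity, ?_⟩
  intro f Lf hLf hf t ht x y
  set a : ℝ := Lf + K * Cc / lam * ‖f‖ with ha
  have ha0 : 0 ≤ a := by positivity
  set B : ℝ := (Lf + ‖f‖) * Real.exp (2 * (K + ‖A‖ + 1) * t) with hB
  have hB0 : 0 ≤ B := by positivity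
  -- the iteration bounds
  set g : ℕ → ℝ → ℝ := fun n s =>
    a * (∑ j ∈ Finset.range n, (K * s) ^ j / j.factorial)
      + B * ((K * s) ^ n / n.factorial) with hg
  have hc1 : ∀ j : ℕ, Continuous fun r : ℝ => (K * r) ^ j / (j.factorial : ℝ) :=
    fun j => ((continuous_const.mul continuous_id).pow j).div_const _
  have hcg : ∀ n, Continuous (g n) := fun n =>
    (continuous_const.mul (continuous_finset_sum _ fun j _ => hc1 j)).add
      (continuous_const.mul (hc1 n))
  have hg0 : ∀ n (r : ℝ), 0 ≤ r → 0 ≤ g n r := by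
    intro n r hr
    have h1 : 0 ≤ ∑ j ∈ Finset.range n, (K * r) ^ j / (j.factorial : ℝ) :=
      Finset.sum_nonneg fun j _ => by positivity
    have h2 : (0:ℝ) ≤ (K * r) ^ n / n.factorial := by positivity
    positivity
  have hce : Continuous fun r : ℝ => Real.exp (-lam * r) :=
    Real.continuous_exp.comp (continuous_const.mul continuous_id)
  -- elementary integrals
  have hexpint : ∀ s : ℝ, ∫ r in (0:ℝ)..s, Real.exp (-lam * r)
      = (1 - Real.exp (-lam * s)) / lam := by
    intro s
    have hder : ∀ r : ℝ, HasDerivAt (fun u : ℝ => -(1 / lam) * Real.exp (-lam * u))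
        (Real.exp (-lam * r)) r := by
      intro r
      have h1 : HasDerivAt (fun u : ℝ => -lam * u) (-lam) r := by
        simpa using (hasDerivAt_id r).const_mul (-lam)
      have h2 := (Real.hasDerivAt_exp (-lam * r)).comp r h1
      have h3 := h2.const_mul (-(1 / lam))
      exact h3.congr_deriv (by field_simp)
    rw [intervalIntegral.integral_eq_sub_of_hasDerivAt (fun r _ => hder r)
      (hce.intervalIntegrable 0 s)]
    field_simp
    rw [mul_zero, neg_zero, Real.exp_zero]
    ring
  have hterm : ∀ (j : ℕ) (s : ℝ), K * ∫ r in (0:ℝ)..s, (K * r) ^ j / (j.factorial : ℝ)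
      = (K * s) ^ (j + 1) / ((j + 1).factorial : ℝ) := by
    intro j s
    have h1 : (fun r : ℝ => (K * r) ^ j / (j.factorial : ℝ))
        = fun r : ℝ => (K ^ j / (j.factorial : ℝ)) * r ^ j := by
      ext r; rw [mul_pow]; ring
    rw [h1, intervalIntegral.integral_const_mul, integral_pow]
    have hfj : ((j.factorial : ℝ)) ≠ 0 := by exact_mod_cast j.factorial_ne_zero
    rw [Nat.factorial_succ]
    push_cast
    field_simp
    ring
  -- main induction
  have hmain : ∀ n : ℕ, ∀ s : ℝ, 0 ≤ s → s ≤ t → ∀ x y : M,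
      |((exp (s • A)) f) x - ((exp (s • A)) f) y| ≤ g n s * dist x y := by
    intro n
    induction n with
    | zero =>
      intro s hs0 hst x y
      have h := apriori A K hK hA f Lf hLf hf t s hs0 hst x y
      simpa [hg, hB] using h
    | succ n ih =>
      intro s hs0 hst x y
      set D : ℝ := dist x y with hD
      have hD0 : 0 ≤ D := dist_nonneg
      rw [key_identity A f x y s]
      -- integrand bound
      set F : ℝ → ℝ := fun r => (A ((exp (r • A)) f)) x - (A ((exp (r • A)) f)) y
        with hF
      set G : ℝ → ℝ := fun r => (K * D) * (g n r + Cc * ‖f‖ * Real.exp (-lam * r))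
        with hGdef
      have hGc : Continuous G := by
        apply continuous_const.mul
        exact (hcg n).add (continuous_const.mul hce)
      have hFG : ∀ r ∈ Set.uIoc (0:ℝ) s, ‖F r‖ ≤ G r := by
        intro r hr
        rw [Set.uIoc_of_le hs0] at hr
        have hr0 : 0 ≤ r := hr.1.le
        have hrt : r ≤ t := hr.2.trans hst
        have h1 := hA ((exp (r • A)) f) (g n r) (hg0 n r hr0)
          (ih r hr0 hrt) x y
        have h2 : ‖(exp (r • A)) f‖ ≤ Cc * Real.exp (-lam * r) * ‖f‖ := by
          calc ‖(exp (r • A)) f‖ ≤ ‖exp (r • A)‖ * ‖f‖ :=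
              (exp (r • A)).le_opNorm f
            _ ≤ Cc * Real.exp (-lam * r) * ‖f‖ :=
              mul_le_mul_of_nonneg_right (hexp r hr0) (norm_nonneg f)
        have h3 : K * (g n r + ‖(exp (r • A)) f‖) * D
            ≤ (K * D) * (g n r + Cc * ‖f‖ * Real.exp (-lam * r)) := by
          have h4 : g n r + ‖(exp (r • A)) f‖
              ≤ g n r + Cc * ‖f‖ * Real.exp (-lam * r) := by
            have := h2; linarith [h2, (by ring :
              Cc * Real.exp (-lam * r) * ‖f‖ = Cc * ‖f‖ * Real.exp (-lam * r))]
          calc K * (g n r + ‖(exp (r • A)) f‖) * D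
              ≤ K * (g n r + Cc * ‖f‖ * Real.exp (-lam * r)) * D := by
                apply mul_le_mul_of_nonneg_right _ hD0
                exact mul_le_mul_of_nonneg_left h4 hK.le
            _ = (K * D) * (g n r + Cc * ‖f‖ * Real.exp (-lam * r)) := by ring
        rw [Real.norm_eq_abs]
        exact (h1.trans h3)
      have hInt : |∫ r in (0:ℝ)..s, F r| ≤ |∫ r in (0:ℝ)..s, G r| := by
        have hae : ∀ᵐ r ∂(MeasureTheory.volume.restrict (Set.uIoc (0:ℝ) s)),
            ‖F r‖ ≤ G r :=
          (MeasureTheory.ae_restrict_iff' measurableSet_uIoc).2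
            (Filter.Eventually.of_forall hFG)
        simpa only [Real.norm_eq_abs] using
          (intervalIntegral.norm_integral_le_of_norm_le hs0
            (Filter.Eventually.of_forall fun r hr => hFG r (by rwa [Set.uIoc_of_le hs0]))
            (hGc.intervalIntegrable (μ := MeasureTheory.volume) 0 s)).trans (le_abs_self _)
      -- compute the integral of G
      have hGval : ∫ r in (0:ℝ)..s, G r
          = (K * D) * ((∫ r in (0:ℝ)..s, g n r)
              + Cc * ‖f‖ * ((1 - Real.exp (-lam * s)) / lam)) := by
        rw [hGdef]
        rw [intervalIntegral.integral_const_mul]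
        congr 1
        rw [intervalIntegral.integral_add (f := fun r => g n r) (g := fun r => Cc * ‖f‖ * Real.exp (-lam * r)) ((hcg n).intervalIntegrable 0 s)
          ((continuous_const.mul hce).intervalIntegrable 0 s),
          intervalIntegral.integral_const_mul, hexpint]
      have hgval : K * ∫ r in (0:ℝ)..s, g n r
          = a * (∑ j ∈ Finset.range n, (K * s) ^ (j + 1) / ((j + 1).factorial : ℝ))
            + B * ((K * s) ^ (n + 1) / ((n + 1).factorial : ℝ)) := by
        have h1 : ∫ r in (0:ℝ)..s, g n r
            = a * (∑ j ∈ Finset.range n, ∫ r in (0:ℝ)..s, (K * r) ^ j / (j.factorial : ℝ))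
              + B * ∫ r in (0:ℝ)..s, (K * r) ^ n / (n.factorial : ℝ) := by
          rw [hg]
          beta_reduce
          rw [intervalIntegral.integral_add (f := fun r => a * ∑ j ∈ Finset.range n, (K * r) ^ j / (j.factorial : ℝ)) (g := fun r => B * ((K * r) ^ n / (n.factorial : ℝ)))
            ((continuous_const.mul (continuous_finset_sum _ fun j _ => hc1 j)).intervalIntegrable 0 s)
            ((continuous_const.mul (hc1 n)).intervalIntegrable 0 s),
            intervalIntegral.integral_const_mul, intervalIntegral.integral_const_mul,
            intervalIntegral.integral_finset_sum
              (fun j _ => (hc1 j).intervalIntegrable 0 s)]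
        have h2 : ∀ j ∈ Finset.range n,
            K * ∫ r in (0:ℝ)..s, (K * r) ^ j / (j.factorial : ℝ)
              = (K * s) ^ (j + 1) / ((j + 1).factorial : ℝ) := fun j _ => hterm j s
        rw [h1, mul_add]
        congr 1
        · rw [← mul_assoc, mul_comm K a, mul_assoc, Finset.mul_sum]
          congr 1
          exact Finset.sum_congr rfl h2
        · rw [← mul_assoc, mul_comm K B, mul_assoc, hterm n s]
      -- nonnegativity of the pieces
      have hgint0 : 0 ≤ ∫ r in (0:ℝ)..s, g n r := by
        apply intervalIntegral.integral_nonneg hs0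
        intro r hr
        exact hg0 n r hr.1
      have hexp0 : 0 ≤ (1 - Real.exp (-lam * s)) / lam := by
        apply div_nonneg _ hlam.le
        have : Real.exp (-lam * s) ≤ 1 := by
          apply Real.exp_le_one_iff.2
          nlinarith
        linarith
      have hGnonneg : 0 ≤ ∫ r in (0:ℝ)..s, G r := by
        rw [hGval]
        have : (0:ℝ) ≤ Cc * ‖f‖ * ((1 - Real.exp (-lam * s)) / lam) := by positivity
        positivity
      rw [abs_of_nonneg hGnonneg] at hInt
      -- assemble
      have hfb : |f x - f y| ≤ Lf * D := hf x y
      have habs : |(f x - f y) + ∫ r in (0:ℝ)..s, F r|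
          ≤ |f x - f y| + |∫ r in (0:ℝ)..s, F r| := abs_add_le _ _
      have hexpb : (1 - Real.exp (-lam * s)) / lam ≤ 1 / lam := by
        gcongr
        linarith [Real.exp_pos (-lam * s)]
      have hsum_eq : ∑ j ∈ Finset.range (n + 1), (K * s) ^ j / (j.factorial : ℝ)
          = (∑ j ∈ Finset.range n, (K * s) ^ (j + 1) / ((j + 1).factorial : ℝ)) + 1 := by
        rw [Finset.sum_range_succ']
        simp
      -- final chain
      have step2 : ∫ r in (0:ℝ)..s, G r
          ≤ D * (a * (∑ j ∈ Finset.range n, (K * s) ^ (j + 1) / ((j + 1).factorial : ℝ))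
              + B * ((K * s) ^ (n + 1) / ((n + 1).factorial : ℝ)))
            + D * (K * Cc / lam * ‖f‖) := by
        rw [hGval]
        calc (K * D) * ((∫ r in (0:ℝ)..s, g n r)
              + Cc * ‖f‖ * ((1 - Real.exp (-lam * s)) / lam))
            = D * (K * ∫ r in (0:ℝ)..s, g n r)
              + (K * D * Cc * ‖f‖) * ((1 - Real.exp (-lam * s)) / lam) := by ring
          _ = D * (a * (∑ j ∈ Finset.range n, (K * s) ^ (j + 1) / ((j + 1).factorial : ℝ))
                + B * ((K * s) ^ (n + 1) / ((n + 1).factorial : ℝ)))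
              + (K * D * Cc * ‖f‖) * ((1 - Real.exp (-lam * s)) / lam) := by rw [hgval]
          _ ≤ D * (a * (∑ j ∈ Finset.range n, (K * s) ^ (j + 1) / ((j + 1).factorial : ℝ))
                + B * ((K * s) ^ (n + 1) / ((n + 1).factorial : ℝ)))
              + (K * D * Cc * ‖f‖) * (1 / lam) := by
            have h5 := mul_le_mul_of_nonneg_left hexpb
              (show (0:ℝ) ≤ K * D * Cc * ‖f‖ by positivity)
            linarith
          _ = D * (a * (∑ j ∈ Finset.range n, (K * s) ^ (j + 1) / ((j + 1).factorial : ℝ))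
                + B * ((K * s) ^ (n + 1) / ((n + 1).factorial : ℝ)))
              + D * (K * Cc / lam * ‖f‖) := by ring
      calc |(f x - f y) + ∫ r in (0:ℝ)..s, F r|
          ≤ |f x - f y| + |∫ r in (0:ℝ)..s, F r| := habs
        _ ≤ Lf * D + ∫ r in (0:ℝ)..s, G r := by linarith [hfb, hInt]
        _ ≤ Lf * D
            + (D * (a * (∑ j ∈ Finset.range n, (K * s) ^ (j + 1) / ((j + 1).factorial : ℝ))
                + B * ((K * s) ^ (n + 1) / ((n + 1).factorial : ℝ)))
              + D * (K * Cc / lam * ‖f‖)) := by linarith [step2]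
        _ = g (n + 1) s * D := by
            simp only [hg]
            rw [hsum_eq, ha]
            ring
  -- take the limit n → ∞ at s = t
  have hpart : Filter.Tendsto
      (fun n => ∑ j ∈ Finset.range n, (K * t) ^ j / (j.factorial : ℝ))
      Filter.atTop (nhds (Real.exp (K * t))) := by
    have hsum : HasSum (fun j : ℕ => (K * t) ^ j / (j.factorial : ℝ)) (Real.exp (K * t)) := by
      rw [Real.exp_eq_exp_ℝ]
      exact expSeries_div_hasSum_exp (K * t)
    exact hsum.tendsto_sum_nat
  have hterm0 : Filter.Tendsto (fun n : ℕ => (K * t) ^ n / (n.factorial : ℝ))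
      Filter.atTop (nhds 0) := FloorSemiring.tendsto_pow_div_factorial_atTop (K * t)
  have hlim : Filter.Tendsto (fun n => g n t * dist x y) Filter.atTop
      (nhds ((a * Real.exp (K * t) + B * 0) * dist x y)) :=
    ((hpart.const_mul a).add (hterm0.const_mul B)).mul_const _
  have hle := ge_of_tendsto' hlim (fun n => hmain n t ht le_rfl x y)
  calc |((exp (t • A)) f) x - ((exp (t • A)) f) y|
      ≤ (a * Real.exp (K * t) + B * 0) * dist x y := hle
    _ = Real.exp (K * t) * (Lf + K * Cc / lam * ‖f‖) * dist x y := by rw [ha]; ring
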